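/- Let P ∈ ℝ^{U×L}, f ∈ ℝ^{U}, s ∈ ℝ^{U} and δ ∈ ℝ^{U}. Set S = Pᵀdiag(f∘s)P and S′ = Pᵀdiag(f∘(s+δ))P, where f∘s denotes the entrywise product of vectors, and let M = P S⁻¹ Pᵀ. If S is positive definite and S′ is positive semidefinite, then ‖S^{-1/2}·S′·S^{-1/2} − I‖_F² = δᵀ ((ffᵀ) ∘ M^{∘2}) δ. -/

import Mathlib

/-!
With `C = S^{1/2}` we have `C⁻¹ S' C⁻¹ - 1 = C⁻¹ (S' - S) C⁻¹` and `S' - S = Pᵀ D P` for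
`D = diag (f ∘ δ)`. This matrix is symmetric, so its squared Frobenius norm is the trace of its
square; cycling the trace turns that into `tr ((D M)²) = ∑ i j, fᵢ δᵢ Mᵢⱼ Mⱼᵢ fⱼ δⱼ`.
-/

open Matrix

section

open scoped ComplexOrder

noncomputable def Matrix.PosSemidef.sqrt {n 𝕜 : Type*} [Fintype n] [DecidableEq n] [RCLike 𝕜]
    {A : Matrix n n 𝕜} (hA : A.PosSemidef) : Matrix n n 𝕜 :=
  hA.1.eigenvectorUnitary.1 * diagonal ((↑) ∘ (Real.sqrt ·) ∘ hA.1.eigenvalues) *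
    (star hA.1.eigenvectorUnitary : Matrix n n 𝕜)

end

namespace Matrix

section Sqrt

open scoped ComplexOrder

variable {n 𝕜 : Type*} [Fintype n] [DecidableEq n] [RCLike 𝕜] {A : Matrix n n 𝕜}

namespace PosSemidef

theorem sqrt_eq_cfc (hA : A.PosSemidef) : hA.sqrt = cfc Real.sqrt A := by
  rw [hA.isHermitian.cfc_eq, IsHermitian.cfc, Unitary.conjStarAlgAut_apply]
  rfl

theorem sqrt_mul_self (hA : A.PosSemidef) : hA.sqrt * hA.sqrt = A := by
  have hspec : ∀ x ∈ spectrum ℝ A, Real.sqrt x * Real.sqrt x = x := by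
    intro x hx
    obtain ⟨i, rfl⟩ := hA.isHermitian.spectrum_real_eq_range_eigenvalues ▸ hx
    exact Real.mul_self_sqrt (hA.eigenvalues_nonneg i)
  rw [sqrt_eq_cfc, ← cfc_mul Real.sqrt Real.sqrt A, cfc_congr hspec]
  exact cfc_id' ℝ A hA.isHermitian

theorem isHermitian_sqrt (hA : A.PosSemidef) : hA.sqrt.IsHermitian := by
  rw [sqrt_eq_cfc]
  exact cfc_predicate Real.sqrt A

end PosSemidef

theorem PosDef.isUnit_det_sqrt (hA : A.PosDef) : IsUnit hA.posSemidef.sqrt.det := by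
  have h : IsUnit (hA.posSemidef.sqrt.det * hA.posSemidef.sqrt.det) := by
    rw [← det_mul, hA.posSemidef.sqrt_mul_self]
    exact hA.isUnit.map detMonoidHom
  exact isUnit_of_mul_isUnit_left h

end Sqrt

variable {m n R : Type*} [Fintype n]

theorem IsSymm.mul_mul_transpose [CommSemiring R] {X : Matrix n n R} (hX : X.IsSymm)
    (P : Matrix m n R) : (P * X * Pᵀ).IsSymm := by
  simp only [IsSymm, transpose_mul, transpose_transpose, hX.eq, Matrix.mul_assoc]

theorem IsSymm.trace_mul_self [CommSemiring R] {A : Matrix n n R} (hA : A.IsSymm) :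
    (A * A).trace = ∑ i, ∑ j, A i j ^ 2 := by
  simp only [trace, diag_apply, mul_apply, sq]
  refine Finset.sum_congr rfl fun i _ => Finset.sum_congr rfl fun j _ => ?_
  rw [hA.apply i j]

theorem inv_mul_mul_inv_sub_one [DecidableEq n] [CommRing R] {C S S' : Matrix n n R}
    (hC : IsUnit C.det) (hCC : C * C = S) : C⁻¹ * S' * C⁻¹ - 1 = C⁻¹ * (S' - S) * C⁻¹ := by
  rw [Matrix.mul_sub, Matrix.sub_mul, ← hCC, Matrix.mul_assoc C⁻¹,
    nonsing_inv_mul_cancel_left _ _ hC, mul_nonsing_inv _ hC]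

theorem trace_mul_mul_self_comm [Fintype m] [CommSemiring R] (A : Matrix n m R)
    (B : Matrix m n R) : (A * B * (A * B)).trace = (B * A * (B * A)).trace := by
  rw [Matrix.mul_assoc, trace_mul_comm]
  simp only [Matrix.mul_assoc]

theorem IsSymm.sum_sq_mul_mul [CommSemiring R] {B C : Matrix n n R} (hB : B.IsSymm)
    (hC : C.IsSymm) : ∑ i, ∑ j, (C * B * C) i j ^ 2 = (B * (C * C) * (B * (C * C))).trace := by
  have hCBC : (C * B * C).IsSymm := by simpa only [hC.eq] using hB.mul_mul_transpose C
  rw [← hCBC.trace_mul_self, Matrix.mul_assoc C B, trace_mul_mul_self_comm, Matrix.mul_assoc B]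

theorem trace_diagonal_mul_sq [DecidableEq n] [CommSemiring R] (d : n → R) (M : Matrix n n R) :
    (diagonal d * M * (diagonal d * M)).trace = d ⬝ᵥ ((M ⊙ Mᵀ) *ᵥ d) := by
  simp only [trace, diag_apply, mul_apply, diagonal_apply, ite_mul, zero_mul,
    Finset.sum_ite_eq, Finset.mem_univ, if_true, dotProduct, mulVec, hadamard_apply,
    transpose_apply, Finset.mul_sum]
  refine Finset.sum_congr rfl fun i _ => Finset.sum_congr rfl fun j _ => ?_
  ring

theorem dotProduct_mul_mulVec_mul [CommSemiring R] (f δ : n → R) (N : Matrix n n R) :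
    (f * δ) ⬝ᵥ (N *ᵥ (f * δ)) = δ ⬝ᵥ ((vecMulVec f f ⊙ N) *ᵥ δ) := by
  simp only [dotProduct, mulVec, hadamard_apply, vecMulVec_apply, Pi.mul_apply, Finset.mul_sum]
  refine Finset.sum_congr rfl fun i _ => Finset.sum_congr rfl fun j _ => ?_
  ring

end Matrix

theorem stmt_5_general {U L : ℕ} (P : Matrix (Fin U) (Fin L) ℝ) (f s δ : Fin U → ℝ)
    (S S' : Matrix (Fin L) (Fin L) ℝ)
    (hS : S = Pᵀ * Matrix.diagonal (f * s) * P)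
    (hS' : S' = Pᵀ * Matrix.diagonal (f * (s + δ)) * P)
    (M : Matrix (Fin U) (Fin U) ℝ) (hM : M = P * S⁻¹ * Pᵀ)
    (hSpd : S.PosDef) :
    ∑ i, ∑ j, (((hSpd.posSemidef.sqrt)⁻¹ * S' * (hSpd.posSemidef.sqrt)⁻¹ - 1) i j) ^ 2
      = δ ⬝ᵥ ((Matrix.vecMulVec f f ⊙ (M ⊙ M)).mulVec δ) := by
  set C := hSpd.posSemidef.sqrt
  have hCC : C * C = S := hSpd.posSemidef.sqrt_mul_self
  have hdiff : S' - S = Pᵀ * diagonal (f * δ) * P := by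
    have hsplit : diagonal (f * (s + δ)) = diagonal (f * s) + diagonal (f * δ) := by
      rw [mul_add]; exact (diagonal_add _ _).symm
    rw [hS, hS', hsplit, Matrix.mul_add, Matrix.add_mul, add_sub_cancel_left]
  have hdiff_symm : (S' - S).IsSymm := by
    simpa only [hdiff, transpose_transpose] using (isSymm_diagonal (f * δ)).mul_mul_transpose Pᵀ
  have hCinv_symm : C⁻¹.IsSymm :=
    (isHermitian_iff_isSymm.mp hSpd.posSemidef.isHermitian_sqrt).inv
  have hM_symm : M.IsSymm :=
    hM ▸ (isHermitian_iff_isSymm.mp hSpd.isHermitian).inv.mul_mul_transpose P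
  calc ∑ i, ∑ j, (C⁻¹ * S' * C⁻¹ - 1) i j ^ 2
      = ((S' - S) * S⁻¹ * ((S' - S) * S⁻¹)).trace := by
        rw [inv_mul_mul_inv_sub_one hSpd.isUnit_det_sqrt hCC,
          hdiff_symm.sum_sq_mul_mul hCinv_symm, ← Matrix.mul_inv_rev, hCC]
    _ = (diagonal (f * δ) * M * (diagonal (f * δ) * M)).trace := by
        rw [hdiff, Matrix.mul_assoc (Pᵀ * _), Matrix.mul_assoc Pᵀ, trace_mul_mul_self_comm,
          Matrix.mul_assoc (diagonal _), ← hM]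
    _ = δ ⬝ᵥ ((vecMulVec f f ⊙ (M ⊙ M)) *ᵥ δ) := by
        rw [trace_diagonal_mul_sq, hM_symm.eq, dotProduct_mul_mulVec_mul]

theorem stmt_5 {U L : ℕ} (P : Matrix (Fin U) (Fin L) ℝ) (f s δ : Fin U → ℝ)
    (S S' : Matrix (Fin L) (Fin L) ℝ)
    (hS : S = Pᵀ * Matrix.diagonal (f * s) * P)
    (hS' : S' = Pᵀ * Matrix.diagonal (f * (s + δ)) * P)
    (M : Matrix (Fin U) (Fin U) ℝ) (hM : M = P * S⁻¹ * Pᵀ)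
    (hSpd : S.PosDef) (hS'psd : S'.PosSemidef) :
    ∑ i, ∑ j, (((hSpd.posSemidef.sqrt)⁻¹ * S' * (hSpd.posSemidef.sqrt)⁻¹ - 1) i j) ^ 2
      = δ ⬝ᵥ ((Matrix.vecMulVec f f ⊙ (M ⊙ M)).mulVec δ) :=
  stmt_5_general P f s δ S S' hS hS' M hM hSpd
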